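/- Let λ₁ > 0 be the maximum of λ₁, λ₂, λ₃ with λ₂ < 0, λ₂ ≥ -λ₁/2, and λ₂+λ₃ > 0, λ₃ ≤ λ₁. Set σ₁ = λ₁+λ₂+λ₃. Then (λ₁+λ₂)(σ₁+λ₁) - 2σ₁(λ₂+λ₃) + 2λ₂² + 2λ₃² ≥ λ₁(λ₁-λ₃) ≥ 0. -/
import Mathlib


/-- Case 2 of Step 2: λ₁ > 0 maximal, λ₂ < 0, λ₂ ≥ -λ₁/2, λ₂+λ₃ > 0,
λ₃ ≤ λ₁; then V ≥ λ₁(λ₁-λ₃) ≥ 0. -/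
theorem stmt_14 (l1 l2 l3 : ℝ)
    (h0 : l1 > 0) (h1 : l1 ≥ l2) (h2 : l3 ≤ l1)
    (h3 : l2 < 0) (h4 : l2 ≥ -l1 / 2) (h5 : l2 + l3 > 0) :
    (l1 + l2) * ((l1 + l2 + l3) + l1) - 2 * (l1 + l2 + l3) * (l2 + l3)
        + 2 * l2 ^ 2 + 2 * l3 ^ 2 ≥ l1 * (l1 - l3)
      ∧ l1 * (l1 - l3) ≥ 0 := by
  constructor
  · nlinarith [sq_nonneg (l2+l3), sq_nonneg (l1+2*l2), sq_nonneg (l1-l3), mul_nonneg (sub_nonneg.2 h2) (neg_nonneg.2 h3.le)]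
  · nlinarith
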